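/- For N ∈ 𝒩, the map φ_N : F(Δ(Σ(N))) → F(𝒩_N) sending a chain ω in Σ(N) to F^k(ω) = ⋃_{x∈ω} max G_{≤x} is the carrier map of the subdivision of the simplex 𝒩_N by the order complex Δ(Σ(N)); equivalently, ⋁_{x∈ω} F^k(x) = ⋃_{x∈ω} F^k(x) for every chain ω. -/

import Mathlib

open Classical Set
noncomputable section

/-- The partition of `Fin m` whose only (possibly) non-singleton block is `B`. -/
def blockSetoid {m : ℕ} (B : Set (Fin m)) : Setoid (Fin m) :=
  ⟨fun x y => x = y ∨ (x ∈ B ∧ y ∈ B), by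
    refine ⟨fun x => Or.inl rfl, ?_, ?_⟩
    · rintro x y (h | h)
      · exact Or.inl h.symm
      · exact Or.inr ⟨h.2, h.1⟩
    · rintro x y z (h1 | h1) (h2 | h2)
      · exact Or.inl (h1.trans h2)
      · subst h1; exact Or.inr h2
      · subst h2; exact Or.inr h1
      · exact Or.inr ⟨h1.1, h2.2⟩⟩

/-- `Π^(k)_m`: partitions of `{1,…,m}` all of whose blocks have size ≡ 1 (mod k). -/
def Pik (k m : ℕ) : Set (Setoid (Fin m)) :=
  {s | ∀ c ∈ s.classes, c.ncard ≡ 1 [MOD k]}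

/-- `I`: partitions with exactly one non-singleton block (the minimal building set of `Π_m`). -/
def BSI (m : ℕ) : Set (Setoid (Fin m)) :=
  {s | ∃ B : Set (Fin m), 2 ≤ B.ncard ∧ s = blockSetoid B}

/-- `G`: partitions with exactly one non-singleton block, of size ≡ 1 (mod k). -/
def BSG (k m : ℕ) : Set (Setoid (Fin m)) :=
  {s | ∃ B : Set (Fin m), 2 ≤ B.ncard ∧ B.ncard ≡ 1 [MOD k] ∧ s = blockSetoid B}

/-- `z` is a minimal upper bound of the set `A` within the subposet `P`. -/
def IsMinUB {L : Type*} [PartialOrder L] (P : Set L) (A : Set L) (z : L) : Prop :=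
  z ∈ P ∧ (∀ a ∈ A, a ≤ z) ∧ ∀ w ∈ P, (∀ a ∈ A, a ≤ w) → w ≤ z → w = z

/-- Maximal elements of `S` lying below `x`. -/
def maxBelow {L : Type*} [PartialOrder L] (S : Set L) (x : L) : Set L :=
  {g ∈ S | g ≤ x ∧ ∀ g' ∈ S, g' ≤ x → g ≤ g' → g = g'}

/-- The support of a partition: union of its non-singleton blocks. -/
def suppPart {m : ℕ} (s : Setoid (Fin m)) : Set (Fin m) :=
  {x | ∃ y, x ≠ y ∧ s x y}

/-- Membership in the family of faces of the complex of k-trees: `N ⊆ G` and every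
antichain in `N` of size at least two has a unique minimal upper bound in `Pik k m`,
which moreover does not lie in `G`. -/
def memN (k m : ℕ) (N : Set (Setoid (Fin m))) : Prop :=
  N ⊆ BSG k m ∧ ∀ S : Finset (Setoid (Fin m)), ↑S ⊆ N → 2 ≤ S.card →
    (∀ a ∈ S, ∀ b ∈ S, a ≠ b → ¬ a ≤ b) →
    (∃! z, IsMinUB (Pik k m) ↑S z) ∧
      ∀ z, IsMinUB (Pik k m) ↑S z → z ∉ BSG k m

/-- `Σ(N)`: the set of all (unique minimal-upper-bound) joins of subsets of `N` inside
`Pik k m`; the empty join yields the minimal element. -/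
def SigmaSet (k m : ℕ) (N : Set (Setoid (Fin m))) : Set (Setoid (Fin m)) :=
  {a | ∃ X ⊆ N, IsMinUB (Pik k m) X a}

/-- The geometric realization carried by a family `F` of (finite) vertex sets: points are
the nonnegative finitely-supported weightings summing to `1` whose support lies in `F`. -/
def geomF {V : Type*} (F : Set (Set V)) : Set (V → ℝ) :=
  {w | (∀ v, 0 ≤ w v) ∧ (Function.support w).Finite ∧ ∑ᶠ v, w v = 1 ∧
        Function.support w ∈ F}

/-- `F` is (the face family of) an abstract simplicial complex: faces are nonempty finite
sets, closed under passing to nonempty subsets. -/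
def IsComplexF {V : Type*} (F : Set (Set V)) : Prop :=
  ∀ s ∈ F, s.Nonempty ∧ s.Finite ∧ ∀ t ⊆ s, t.Nonempty → t ∈ F

/-- The closed cell of a simplex `s`: all points supported on a nonempty subset of `s`. -/
def closedCell {V : Type*} (s : Set V) : Set (V → ℝ) :=
  geomF {t | t ⊆ s ∧ t.Nonempty}

/-- The open cell of a simplex `s`: all points supported on exactly `s`. -/
def openCell {V : Type*} (s : Set V) : Set (V → ℝ) :=
  geomF {s}

/-- The linear extension of a vertex map `f0 : V → |Q|` to the realization. -/
def linExt {V W : Type*} (f0 : V → W → ℝ) (w : V → ℝ) : W → ℝ :=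
  fun u => ∑ᶠ v, w v * f0 v u

/-- `P` is a subdivision of `Q` with carrier map `φ` and vertex map `f0`: `φ` is a poset
map of face posets, each vertex of a face `p` is sent into the closed cell of `φ p`, and
the linear extension of `f0` restricts to a homeomorphism of realizations. -/
def IsSubdivOn {V W : Type*} (P : Set (Set V)) (Q : Set (Set W))
    (φ : Set V → Set W) (f0 : V → W → ℝ) : Prop :=
  (∀ p ∈ P, φ p ∈ Q) ∧
  (∀ p ∈ P, ∀ p' ∈ P, p' ⊆ p → φ p' ⊆ φ p) ∧
  (∀ p ∈ P, ∀ v ∈ p, f0 v ∈ closedCell (φ p)) ∧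
  ∃ h : (geomF P) ≃ₜ (geomF Q), ∀ w : geomF P, (h w : W → ℝ) = linExt f0 (w : V → ℝ)

/-!
Two blocks of `N` that meet are nested: otherwise the class of a common point in their minimal
upper bound spans an element of `G` that is an upper bound below it, so that bound lies in `G`.
For such a laminar `X ⊆ N` the join `⋁ X` is computed blockwise, lies in `Π^(k)_m`, and
`max G_{≤ ⋁ X}` is the set of maximal elements of `X`; hence every `z ∈ Σ(N) \ {⊥}` is the join
of its factor set `max G_{≤ z} ⊆ N`.

Send the vertex `z` to the barycenter of `max G_{≤ z}`. A point of the cone over a chain with top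
`z` maps to a weighting `u` of `N` whose support has join `z`, and whose minimum over
`max G_{≤ z}` is the weight of `z` divided by `|max G_{≤ z}|` (some factor of `z` is not below the
next element of the chain). Peeling off the top vertex thus recovers the chain from `u`, and run
greedily from an arbitrary `u` it constructs a preimage; the linear extension is a continuous
bijection from a compact space onto a Hausdorff one.
-/

instance Setoid.finite {α : Type*} [Finite α] : Finite (Setoid α) :=
  Finite.of_injective (fun s : Setoid α => s.r) fun _ _ h => Setoid.ext fun x y => by
    simp only at h; rw [h]

noncomputable instance Setoid.fintype {α : Type*} [Finite α] : Fintype (Setoid α) :=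
  Fintype.ofFinite _

lemma IsChain.exists_isGreatest {α : Type*} [PartialOrder α] {s : Set α}
    (hc : IsChain (· ≤ ·) s) (hs : s.Finite) (hne : s.Nonempty) : ∃ z, IsGreatest s z := by
  obtain ⟨z, hz⟩ := hs.exists_maximal hne
  exact ⟨z, hz.prop, fun x hx => (hc.total hx hz.prop).elim id fun h => hz.2 hx h⟩

lemma sSup_setOf_maximal {α : Type*} [CompleteLattice α] {s : Set α} (hs : s.Finite) :
    sSup {x | Maximal (· ∈ s) x} = sSup s := by
  refine le_antisymm (sSup_le_sSup fun x hx => hx.prop) (sSup_le fun x hx => ?_)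
  obtain ⟨y, hxy, hy⟩ := hs.exists_le_maximal hx
  exact hxy.trans (le_sSup hy)

lemma mem_maxBelow_of_le {L : Type*} [PartialOrder L] {S : Set L} {g y z : L}
    (hg : g ∈ maxBelow S z) (hgy : g ≤ y) (hyz : y ≤ z) : g ∈ maxBelow S y :=
  ⟨hg.1, hgy, fun g' hg' hg'y => hg.2.2 g' hg' (hg'y.trans hyz)⟩

section Blocks

variable {m : ℕ}

lemma blockSetoid_le_iff {B : Set (Fin m)} {s : Setoid (Fin m)} :
    blockSetoid B ≤ s ↔ ∀ x ∈ B, ∀ y ∈ B, s x y := by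
  refine ⟨fun h x hx y hy => h (Or.inr ⟨hx, hy⟩), fun h x y hxy => ?_⟩
  rcases hxy with rfl | ⟨hx, hy⟩
  exacts [s.refl x, h x hx y hy]

lemma suppPart_blockSetoid {B : Set (Fin m)} (hB : 2 ≤ B.ncard) :
    suppPart (blockSetoid B) = B := by
  ext x
  refine ⟨fun ⟨y, hxy, h⟩ => h.elim (absurd · hxy) And.left, fun hx => ?_⟩
  obtain ⟨y, hy, hyx⟩ := exists_ne_of_one_lt_ncard hB x
  exact ⟨y, hyx.symm, Or.inr ⟨hx, hy⟩⟩

lemma blockSetoid_ne_bot {B : Set (Fin m)} (hB : 2 ≤ B.ncard) : blockSetoid B ≠ ⊥ := by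
  intro h
  obtain ⟨x, hx, y, hy, hxy⟩ := (one_lt_ncard (toFinite B)).mp hB
  have : (⊥ : Setoid (Fin m)) x y := h ▸ Or.inr ⟨hx, hy⟩
  exact hxy this

lemma blockSetoid_mem_Pik {k : ℕ} {B : Set (Fin m)} (hB : B.ncard ≡ 1 [MOD k]) :
    blockSetoid B ∈ Pik k m := by
  rintro _ ⟨y, rfl⟩
  by_cases hy : y ∈ B
  · have hclass : {x | blockSetoid B x y} = B :=
      ext fun x => ⟨fun h => h.elim (· ▸ hy) And.left, fun hx => Or.inr ⟨hx, hy⟩⟩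
    rwa [hclass]
  · have hclass : {x | blockSetoid B x y} = {y} :=
      ext fun x => ⟨fun h => h.elim id fun h => absurd h.2 hy, fun hx => Or.inl hx⟩
    rw [hclass, ncard_singleton]

lemma blockSetoid_mono {B C : Set (Fin m)} (h : B ⊆ C) : blockSetoid B ≤ blockSetoid C :=
  blockSetoid_le_iff.mpr fun _ ha _ hb => Or.inr ⟨h ha, h hb⟩

lemma blockSetoid_class_le (z : Setoid (Fin m)) (x : Fin m) : blockSetoid {y | z y x} ≤ z :=
  blockSetoid_le_iff.mpr fun _ ha _ hb => z.trans ha (z.symm hb)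

lemma BSG_subset_Pik (k : ℕ) : BSG k m ⊆ Pik k m := by
  rintro _ ⟨B, -, hB, rfl⟩
  exact blockSetoid_mem_Pik hB

end Blocks

def IsLaminar {m : ℕ} (X : Set (Setoid (Fin m))) : Prop :=
  ∀ g ∈ X, ∀ h ∈ X, (suppPart g ∩ suppPart h).Nonempty → g ≤ h ∨ h ≤ g

namespace IsLaminar

variable {m : ℕ} {X Y : Set (Setoid (Fin m))}

lemma mono (hX : IsLaminar X) (hYX : Y ⊆ X) : IsLaminar Y :=
  fun g hg h hh => hX g (hYX hg) h (hYX hh)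

lemma sSup_apply (hX : IsLaminar X) {x y : Fin m} :
    sSup X x y ↔ x = y ∨ ∃ g ∈ X, g x y := by
  refine ⟨fun hxy => ?_, ?_⟩
  · rw [Setoid.sSup_eq_eqvGen] at hxy
    induction hxy with
    | rel x y h => exact .inr h
    | refl x => exact .inl rfl
    | symm x y _ ih =>
      obtain rfl | ⟨g, hg, h⟩ := ih
      exacts [.inl rfl, .inr ⟨g, hg, g.symm h⟩]
    | trans x y z _ _ ihxy ihyz =>
      obtain rfl | ⟨g, hg, hxy⟩ := ihxy
      · exact ihyz
      obtain rfl | ⟨h, hh, hyz⟩ := ihyz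
      · exact .inr ⟨g, hg, hxy⟩
      by_cases hxy' : x = y
      · exact .inr ⟨h, hh, hxy' ▸ hyz⟩
      by_cases hyz' : y = z
      · exact .inr ⟨g, hg, hyz' ▸ hxy⟩
      rcases hX g hg h hh ⟨y, ⟨x, Ne.symm hxy', g.symm hxy⟩, ⟨z, hyz', hyz⟩⟩ with hgh | hhg
      · exact .inr ⟨h, hh, h.trans (hgh hxy) hyz⟩
      · exact .inr ⟨g, hg, g.trans hxy (hhg hyz)⟩
  · rintro (rfl | ⟨g, hg, h⟩)
    exacts [(sSup X).refl x, le_sSup hg h]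

lemma exists_class_eq (hX : IsLaminar X) {x : Fin m} (hx : x ∈ suppPart (sSup X)) :
    ∃ h ∈ X, ∀ y, sSup X x y ↔ h x y := by
  obtain ⟨y, hxy, hsup⟩ := hx
  obtain ⟨g, hg, hgxy⟩ := (hX.sSup_apply.mp hsup).resolve_left hxy
  obtain ⟨h, hgh, hmax⟩ :=
    Finite.exists_le_maximal (α := Setoid (Fin m)) (p := fun h => h ∈ X ∧ x ∈ suppPart h)
      ⟨hg, y, hxy, hgxy⟩
  have hgreatest : ∀ g ∈ X, x ∈ suppPart g → g ≤ h := fun g hg hxg =>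
    (hX g hg h hmax.prop.1 ⟨x, hxg, hmax.prop.2⟩).elim id fun hhg => hmax.2 ⟨hg, hxg⟩ hhg
  refine ⟨h, hmax.prop.1, fun z => ⟨fun hxz => ?_, fun hxz => le_sSup hmax.prop.1 hxz⟩⟩
  obtain rfl | ⟨g, hg, hgxz⟩ := hX.sSup_apply.mp hxz
  · exact h.refl x
  by_cases hxz' : x = z
  · exact hxz' ▸ h.refl x
  · exact hgreatest g hg ⟨z, hxz', hgxz⟩ hgxz

lemma sSup_mem_Pik {k : ℕ} (hX : IsLaminar X) (hXP : X ⊆ Pik k m) : sSup X ∈ Pik k m := by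
  rintro _ ⟨y, rfl⟩
  by_cases hy : y ∈ suppPart (sSup X)
  · obtain ⟨h, hh, hclass⟩ := hX.exists_class_eq hy
    have : {x | sSup X x y} = {x | h x y} :=
      ext fun x => by simp only [mem_ofPred_eq, Setoid.comm' (sSup X), Setoid.comm' h, hclass]
    rw [this]
    exact hXP hh _ (Setoid.mem_classes h y)
  · have : {x | sSup X x y} = {y} :=
      ext fun x => ⟨fun hxy => by_contra fun hne => hy ⟨x, Ne.symm hne, (sSup X).symm hxy⟩,
        fun hx => hx ▸ (sSup X).refl x⟩
    rw [this, ncard_singleton]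

lemma exists_le_of_blockSetoid_le (hX : IsLaminar X) {B : Set (Fin m)} (hB : 2 ≤ B.ncard)
    (hle : blockSetoid B ≤ sSup X) : ∃ h ∈ X, blockSetoid B ≤ h := by
  obtain ⟨x, hx, y, hy, hxy⟩ := (one_lt_ncard (toFinite B)).mp hB
  obtain ⟨h, hh, hclass⟩ := hX.exists_class_eq ⟨y, hxy, hle (Or.inr ⟨hx, hy⟩)⟩
  refine ⟨h, hh, blockSetoid_le_iff.mpr fun a ha b hb => ?_⟩
  have hxa := (hclass a).mp (hle (Or.inr ⟨hx, ha⟩))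
  have hxb := (hclass b).mp (hle (Or.inr ⟨hx, hb⟩))
  exact h.trans (h.symm hxa) hxb

end IsLaminar

namespace memN

variable {k m : ℕ} {N X : Set (Setoid (Fin m))}

lemma subset_Pik (hN : memN k m N) : N ⊆ Pik k m := hN.1.trans (BSG_subset_Pik k)

lemma isLaminar (hN : memN k m N) : IsLaminar N := by
  intro g hg h hh ⟨x, hxg, hxh⟩
  by_contra hcmp
  rw [not_or] at hcmp
  obtain ⟨B, hB2, -, rfl⟩ := hN.1 hg
  obtain ⟨C, hC2, -, rfl⟩ := hN.1 hh
  rw [suppPart_blockSetoid hB2] at hxg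
  rw [suppPart_blockSetoid hC2] at hxh
  have hpair : (({blockSetoid B, blockSetoid C} : Finset _) : Set (Setoid (Fin m))) =
      {blockSetoid B, blockSetoid C} := by simp
  obtain ⟨⟨z, hz, -⟩, hzG⟩ := hN.2 {blockSetoid B, blockSetoid C}
    (by rw [hpair]; exact insert_subset hg (singleton_subset_iff.mpr hh))
    (Finset.card_pair fun h => hcmp.1 h.le).ge
    (by
      simp only [Finset.mem_insert, Finset.mem_singleton]
      rintro a (rfl | rfl) b (rfl | rfl) hab
      exacts [absurd rfl hab, hcmp.1, hcmp.2, absurd rfl hab])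
  rw [hpair] at hz hzG
  -- the class `D` of `x` in the minimal upper bound `z` contains `B ∪ C`, so `blockSetoid D`,
  -- an element of `G`, is an upper bound below `z`
  set D := {y | z y x}
  have hBD : B ⊆ D := fun y hy => hz.2.1 _ (mem_insert _ _) (Or.inr ⟨hy, hxg⟩)
  have hCD : C ⊆ D := fun y hy => hz.2.1 _ (mem_insert_of_mem _ rfl) (Or.inr ⟨hy, hxh⟩)
  have hD1 : D.ncard ≡ 1 [MOD k] := hz.1 D (Setoid.mem_classes z x)
  have hDz : blockSetoid D = z := hz.2.2 _ (blockSetoid_mem_Pik hD1)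
    (by rintro a (rfl | rfl); exacts [blockSetoid_mono hBD, blockSetoid_mono hCD])
    (blockSetoid_class_le z x)
  exact hzG z hz ⟨D, hB2.trans (ncard_le_ncard hBD), hD1, hDz.symm⟩

lemma isMinUB_sSup (hN : memN k m N) (hX : X ⊆ N) : IsMinUB (Pik k m) X (sSup X) :=
  ⟨(hN.isLaminar.mono hX).sSup_mem_Pik (hX.trans hN.subset_Pik), fun _ => le_sSup,
    fun _ _ hw hle => le_antisymm hle (sSup_le hw)⟩

lemma eq_sSup_of_isMinUB (hN : memN k m N) (hX : X ⊆ N) {a : Setoid (Fin m)}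
    (ha : IsMinUB (Pik k m) X a) : a = sSup X :=
  (ha.2.2 _ (hN.isMinUB_sSup hX).1 (fun _ => le_sSup) (sSup_le ha.2.1)).symm

lemma maxBelow_sSup (hN : memN k m N) (hX : X ⊆ N) :
    maxBelow (BSG k m) (sSup X) = {g | Maximal (· ∈ X) g} := by
  have hXl := hN.isLaminar.mono hX
  ext g
  constructor
  · rintro ⟨⟨B, hB2, -, rfl⟩, hle, hmax⟩
    obtain ⟨h, hh, hBh⟩ := hXl.exists_le_of_blockSetoid_le hB2 hle
    obtain rfl := hmax h (hN.1 (hX hh)) (le_sSup hh) hBh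
    exact ⟨hh, fun h' hh' hle' => (hmax h' (hN.1 (hX hh')) (le_sSup hh') hle').ge⟩
  · intro hg
    refine ⟨hN.1 (hX hg.prop), le_sSup hg.prop, ?_⟩
    rintro _ ⟨B, hB2, -, rfl⟩ hle hgB
    obtain ⟨h, hh, hBh⟩ := hXl.exists_le_of_blockSetoid_le hB2 hle
    exact hgB.antisymm (hBh.trans (hg.2 hh (hgB.trans hBh)))

lemma sSup_mem_SigmaSet (hN : memN k m N) (hX : X ⊆ N) (hne : X.Nonempty) :
    sSup X ∈ SigmaSet k m N \ {⊥} := by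
  refine ⟨⟨X, hX, hN.isMinUB_sSup hX⟩, fun hbot => ?_⟩
  obtain ⟨g, hg⟩ := hne
  obtain ⟨B, hB2, -, rfl⟩ := hN.1 (hX hg)
  exact blockSetoid_ne_bot hB2 (le_bot_iff.mp (hbot ▸ le_sSup hg))

lemma maxBelow_sSup_subset (hN : memN k m N) (hX : X ⊆ N) :
    maxBelow (BSG k m) (sSup X) ⊆ X := by
  rw [hN.maxBelow_sSup hX]
  exact fun _ hg => hg.prop

lemma maxBelow_subset (hN : memN k m N) {z : Setoid (Fin m)} (hz : z ∈ SigmaSet k m N) :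
    maxBelow (BSG k m) z ⊆ N := by
  obtain ⟨X, hX, hmin⟩ := hz
  rw [hN.eq_sSup_of_isMinUB hX hmin]
  exact (hN.maxBelow_sSup_subset hX).trans hX

lemma sSup_maxBelow (hN : memN k m N) {z : Setoid (Fin m)} (hz : z ∈ SigmaSet k m N) :
    sSup (maxBelow (BSG k m) z) = z := by
  obtain ⟨X, hX, hmin⟩ := hz
  rw [hN.eq_sSup_of_isMinUB hX hmin, hN.maxBelow_sSup hX, sSup_setOf_maximal (toFinite X)]

lemma maxBelow_nonempty (hN : memN k m N) {z : Setoid (Fin m)}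
    (hz : z ∈ SigmaSet k m N \ {⊥}) : (maxBelow (BSG k m) z).Nonempty := by
  rw [nonempty_iff_ne_empty]
  intro h
  exact hz.2 ((hN.sSup_maxBelow hz.1).symm.trans (h ▸ sSup_empty))

end memN

section Realization

variable {V W : Type*}

def unifOn (s : Set V) : V → ℝ :=
  s.indicator fun _ => (s.ncard : ℝ)⁻¹

lemma unifOn_nonneg (s : Set V) (v : V) : 0 ≤ unifOn s v :=
  indicator_nonneg (fun _ _ => inv_nonneg.mpr (Nat.cast_nonneg _)) v

lemma unifOn_of_mem {s : Set V} {v : V} (hv : v ∈ s) : unifOn s v = (s.ncard : ℝ)⁻¹ :=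
  indicator_of_mem hv _

lemma unifOn_of_notMem {s : Set V} {v : V} (hv : v ∉ s) : unifOn s v = 0 :=
  indicator_of_notMem hv _

lemma support_unifOn [Finite V] {s : Set V} (hs : s.Nonempty) :
    Function.support (unifOn s) = s := by
  rw [unifOn, support_indicator, Function.support_const (inv_ne_zero
    (Nat.cast_ne_zero.mpr hs.ncard_pos.ne')), inter_univ]

lemma sum_unifOn [Fintype V] {s : Set V} (hs : s.Nonempty) : ∑ v, unifOn s v = 1 :=
  calc ∑ v, unifOn s v = ∑ _ ∈ s.toFinset, (s.ncard : ℝ)⁻¹ := by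
        rw [unifOn, ← Finset.sum_indicator_subset _ (Finset.subset_univ s.toFinset), coe_toFinset]
    _ = 1 := by
        rw [Finset.sum_const, nsmul_eq_mul, ← ncard_eq_toFinset_card',
          mul_inv_cancel₀ (Nat.cast_ne_zero.mpr hs.ncard_pos.ne')]

lemma smul_unifOn_of_mem [Finite V] {s : Set V} {v : V} (hv : v ∈ s) (a : ℝ) :
    ((s.ncard * a) • unifOn s) v = a := by
  rw [Pi.smul_apply, smul_eq_mul, unifOn_of_mem hv, mul_right_comm,
    mul_inv_cancel₀ (Nat.cast_ne_zero.mpr (nonempty_of_mem hv).ncard_pos.ne'), one_mul]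

section Peel

variable [Finite V] {s : Set V} {u : V → ℝ} {v₀ : V}

lemma sub_smul_unifOn_nonneg (hu : ∀ v, 0 ≤ u v) (hmin : ∀ v ∈ s, u v₀ ≤ u v) (v : V) :
    0 ≤ (u - (s.ncard * u v₀) • unifOn s) v := by
  by_cases hv : v ∈ s
  · rw [Pi.sub_apply, smul_unifOn_of_mem hv, sub_nonneg]; exact hmin v hv
  · rw [Pi.sub_apply, Pi.smul_apply, unifOn_of_notMem hv, smul_zero, sub_zero]; exact hu v

lemma support_sub_smul_unifOn_subset (hs : s ⊆ Function.support u) (hv₀ : v₀ ∈ s) :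
    Function.support (u - (s.ncard * u v₀) • unifOn s) ⊆ Function.support u \ {v₀} := by
  intro v hv
  refine ⟨fun huv => hv ?_, fun hvv₀ => hv ?_⟩
  · rw [Pi.sub_apply, Pi.smul_apply, unifOn_of_notMem fun hvs => hs hvs huv, smul_zero,
      sub_zero, huv]
  · rw [mem_singleton_iff.mp hvv₀, Pi.sub_apply, smul_unifOn_of_mem hv₀, sub_self]

end Peel

lemma mem_geomF_iff [Fintype V] {F : Set (Set V)} {w : V → ℝ} :
    w ∈ geomF F ↔ (∀ v, 0 ≤ w v) ∧ ∑ v, w v = 1 ∧ Function.support w ∈ F := by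
  rw [geomF, mem_ofPred_eq, finsum_eq_sum_of_fintype]
  exact ⟨fun ⟨h0, _, h1, hF⟩ => ⟨h0, h1, hF⟩, fun ⟨h0, h1, hF⟩ => ⟨h0, toFinite _, h1, hF⟩⟩

lemma support_nonempty_of_sum_eq_one [Fintype V] {w : V → ℝ} (h : ∑ v, w v = 1) :
    (Function.support w).Nonempty := by
  by_contra hw
  rw [not_nonempty_iff_eq_empty, Function.support_eq_empty_iff] at hw
  simp [hw] at h

lemma unifOn_mem_closedCell [Fintype V] {s t : Set V} (hs : s.Nonempty) (hst : s ⊆ t) :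
    unifOn s ∈ closedCell t :=
  mem_geomF_iff.mpr ⟨unifOn_nonneg s, sum_unifOn hs, by rw [support_unifOn hs]; exact ⟨hst, hs⟩⟩

lemma linExt_eq_linearCombination [Fintype V] (f0 : V → W → ℝ) :
    linExt f0 = Fintype.linearCombination ℝ f0 := by
  ext w u
  simp [linExt, Fintype.linearCombination_apply, finsum_eq_sum_of_fintype, Finset.sum_apply]

lemma linExt_apply [Fintype V] (f0 : V → W → ℝ) (w : V → ℝ) (u : W) :
    linExt f0 w u = ∑ v, w v * f0 v u :=
  finsum_eq_sum_of_fintype _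

lemma continuous_linExt [Fintype V] [Fintype W] (f0 : V → W → ℝ) : Continuous (linExt f0) := by
  rw [linExt_eq_linearCombination]
  exact LinearMap.continuous_of_finiteDimensional _

lemma linExt_add_single [Fintype V] (f0 : V → W → ℝ) (w : V → ℝ) (v : V) (t : ℝ) :
    linExt f0 (w + Pi.single v t) = linExt f0 w + t • f0 v := by
  simp [linExt_eq_linearCombination]

lemma update_zero_add_single (w : V → ℝ) (v : V) :
    Function.update w v 0 + Pi.single v (w v) = w := by
  rw [Pi.update_eq_sub_add_single, Pi.single_zero, add_zero, sub_add_cancel]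

lemma linExt_update_zero [Fintype V] (f0 : V → W → ℝ) (w : V → ℝ) (v : V) :
    linExt f0 (Function.update w v 0) = linExt f0 w - w v • f0 v := by
  rw [eq_sub_iff_add_eq, ← linExt_add_single, update_zero_add_single]

lemma sum_linExt [Fintype V] [Fintype W] (f0 : V → W → ℝ) (w : V → ℝ) :
    ∑ u, linExt f0 w u = ∑ v, w v * ∑ u, f0 v u := by
  simp only [linExt_apply, Finset.mul_sum]
  exact Finset.sum_comm

lemma linExt_nonneg [Fintype V] {f0 : V → W → ℝ} (hf0 : ∀ v u, 0 ≤ f0 v u) {w : V → ℝ}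
    (hw : ∀ v, 0 ≤ w v) (u : W) : 0 ≤ linExt f0 w u := by
  rw [linExt_apply]
  exact Finset.sum_nonneg fun v _ => mul_nonneg (hw v) (hf0 v u)

lemma support_linExt [Fintype V] {f0 : V → W → ℝ} (hf0 : ∀ v u, 0 ≤ f0 v u) {w : V → ℝ}
    (hw : ∀ v, 0 ≤ w v) :
    Function.support (linExt f0 w) = ⋃ v ∈ Function.support w, Function.support (f0 v) := by
  ext u
  simp [linExt_apply, Finset.sum_eq_zero_iff_of_nonneg fun v _ => mul_nonneg (hw v) (hf0 v u)]

end Realization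

section Compactness

variable {V W : Type*} [Fintype V]

lemma geomF_eq_stdSimplex_inter {F : Set (Set V)} (hF : IsComplexF F) :
    geomF F = stdSimplex ℝ V ∩ ⋃ s ∈ F, {w | ∀ v ∉ s, w v = 0} := by
  ext w
  rw [mem_geomF_iff]
  constructor
  · rintro ⟨h0, h1, hF'⟩
    exact ⟨⟨h0, h1⟩, mem_biUnion hF' fun v hv => Function.notMem_support.mp hv⟩
  · rintro ⟨⟨h0, h1⟩, hw⟩
    obtain ⟨s, hs, hws⟩ := mem_iUnion₂.mp hw
    exact ⟨h0, h1, (hF s hs).2.2 _ (fun v hv => by_contra fun hvs => hv (hws v hvs))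
      (support_nonempty_of_sum_eq_one h1)⟩

lemma isCompact_geomF {F : Set (Set V)} (hF : IsComplexF F) : IsCompact (geomF F) := by
  rw [geomF_eq_stdSimplex_inter hF]
  refine (isCompact_stdSimplex ℝ V).inter_right ((toFinite F).isClosed_biUnion fun s _ => ?_)
  simp only [ofPred_forall]
  exact isClosed_biInter fun v _ => isClosed_eq (continuous_apply v) continuous_const

lemma exists_homeomorph_of_bijOn [Fintype W] {P : Set (Set V)} {Q : Set (Set W)}
    (hP : IsComplexF P) {f0 : V → W → ℝ} (h : BijOn (linExt f0) (geomF P) (geomF Q)) :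
    ∃ e : geomF P ≃ₜ geomF Q, ∀ w : geomF P, (e w : W → ℝ) = linExt f0 w := by
  have : CompactSpace (geomF P) := isCompact_iff_compactSpace.mp (isCompact_geomF hP)
  have hcont : Continuous (h.equiv (linExt f0)) :=
    ((continuous_linExt f0).comp continuous_subtype_val).subtype_mk _
  exact ⟨hcont.homeoOfEquivCompactToT2, fun _ => rfl⟩

end Compactness

section Subdivision

variable {k m : ℕ} {N : Set (Setoid (Fin m))}

/-- The vertex `z` of `Δ(Σ(N))` is placed at the barycenter of the face `max G_{≤ z}`. -/
def faceBarycenter (k m : ℕ) (z : Setoid (Fin m)) : Setoid (Fin m) → ℝ :=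
  unifOn (maxBelow (BSG k m) z)

/-- The cone over the realization of `Δ(Σ(N))`. -/
def chainCone (k m : ℕ) (N : Set (Setoid (Fin m))) : Set (Setoid (Fin m) → ℝ) :=
  {w | (∀ v, 0 ≤ w v) ∧ Function.support w ⊆ SigmaSet k m N \ {⊥} ∧
    IsChain (· ≤ ·) (Function.support w)}

lemma faceBarycenter_nonneg (z g : Setoid (Fin m)) : 0 ≤ faceBarycenter k m z g :=
  unifOn_nonneg _ _

lemma support_linExt_faceBarycenter (hN : memN k m N) {w : Setoid (Fin m) → ℝ}
    (hw : w ∈ chainCone k m N) :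
    Function.support (linExt (faceBarycenter k m) w) =
      ⋃ x ∈ Function.support w, maxBelow (BSG k m) x := by
  rw [support_linExt (fun _ _ => faceBarycenter_nonneg _ _) hw.1]
  exact iUnion₂_congr fun x hx => support_unifOn (hN.maxBelow_nonempty (hw.2.1 hx))

lemma sum_linExt_faceBarycenter (hN : memN k m N) {w : Setoid (Fin m) → ℝ}
    (hw : w ∈ chainCone k m N) :
    ∑ g, linExt (faceBarycenter k m) w g = ∑ v, w v := by
  rw [sum_linExt]
  refine Finset.sum_congr rfl fun v _ => ?_
  by_cases hv : w v = 0
  · rw [hv, zero_mul]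
  · rw [faceBarycenter, sum_unifOn (hN.maxBelow_nonempty (hw.2.1 hv)), mul_one]

lemma le_sSup_support_linExt (hN : memN k m N) {w : Setoid (Fin m) → ℝ}
    (hw : w ∈ chainCone k m N) {x : Setoid (Fin m)} (hx : x ∈ Function.support w) :
    x ≤ sSup (Function.support (linExt (faceBarycenter k m) w)) := by
  rw [← hN.sSup_maxBelow (hw.2.1 hx).1, support_linExt_faceBarycenter hN hw]
  exact sSup_le_sSup (subset_biUnion_of_mem hx)

lemma sSup_support_linExt (hN : memN k m N) {w : Setoid (Fin m) → ℝ}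
    (hw : w ∈ chainCone k m N) {z : Setoid (Fin m)} (hz : IsGreatest (Function.support w) z) :
    sSup (Function.support (linExt (faceBarycenter k m) w)) = z := by
  refine le_antisymm ?_ (le_sSup_support_linExt hN hw hz.1)
  rw [support_linExt_faceBarycenter hN hw]
  exact sSup_le fun g hg => by
    obtain ⟨x, hx, hgx⟩ := mem_iUnion₂.mp hg
    exact hgx.2.1.trans (hz.2 hx)

lemma exists_mem_maxBelow_not_le (hN : memN k m N) {w : Setoid (Fin m) → ℝ}
    (hw : w ∈ chainCone k m N) {z : Setoid (Fin m)} (hz : IsGreatest (Function.support w) z) :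
    ∃ g ∈ maxBelow (BSG k m) z, ∀ v ∈ Function.support w, v ≠ z → ¬ g ≤ v := by
  rcases (Function.support w \ {z}).eq_empty_or_nonempty with hrest | hrest
  · obtain ⟨g, hg⟩ := hN.maxBelow_nonempty (hw.2.1 hz.1)
    exact ⟨g, hg, fun v hv hvz => (eq_empty_iff_forall_notMem.mp hrest v ⟨hv, hvz⟩).elim⟩
  obtain ⟨y, hy⟩ := (hw.2.2.mono sdiff_subset).exists_isGreatest (toFinite _) hrest
  -- `y < z` in `Σ(N)`, so `max G_{≤ z} ⊄ max G_{≤ y}`, as each is the join of its factors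
  have hFz : ¬ maxBelow (BSG k m) z ⊆ maxBelow (BSG k m) y := fun hsub =>
    hy.1.2 ((hz.2 hy.1.1).antisymm (by
      rw [← hN.sSup_maxBelow (hw.2.1 hz.1).1, ← hN.sSup_maxBelow (hw.2.1 hy.1.1).1]
      exact sSup_le_sSup hsub))
  obtain ⟨g, hgz, hgy⟩ := not_subset.mp hFz
  exact ⟨g, hgz, fun v hv hvz hgv =>
    hgy (mem_maxBelow_of_le hgz (hgv.trans (hy.2 ⟨hv, hvz⟩)) (hz.2 hy.1.1))⟩

lemma isLeast_linExt (hN : memN k m N) {w : Setoid (Fin m) → ℝ}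
    (hw : w ∈ chainCone k m N) {z : Setoid (Fin m)} (hz : IsGreatest (Function.support w) z) :
    IsLeast (linExt (faceBarycenter k m) w '' maxBelow (BSG k m) z)
      (w z * ((maxBelow (BSG k m) z).ncard : ℝ)⁻¹) := by
  have hterm : ∀ v g, 0 ≤ w v * faceBarycenter k m v g := fun v g =>
    mul_nonneg (hw.1 v) (faceBarycenter_nonneg v g)
  refine ⟨?_, ?_⟩
  · obtain ⟨g, hg, hnle⟩ := exists_mem_maxBelow_not_le hN hw hz
    refine ⟨g, hg, ?_⟩
    rw [linExt_apply, Finset.sum_eq_single z (fun v _ hvz => ?_) (absurd (Finset.mem_univ z)),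
      faceBarycenter, unifOn_of_mem hg]
    by_cases hv : v ∈ Function.support w
    · rw [faceBarycenter, unifOn_of_notMem fun hgv => hnle v hv hvz hgv.2.1, mul_zero]
    · rw [Function.notMem_support.mp hv, zero_mul]
  · rintro _ ⟨g, hg, rfl⟩
    rw [linExt_apply, ← unifOn_of_mem hg]
    exact Finset.single_le_sum (fun v _ => hterm v g) (Finset.mem_univ z)

lemma linExt_faceBarycenter_eq_zero_iff (hN : memN k m N) {w : Setoid (Fin m) → ℝ}
    (hw : w ∈ chainCone k m N) : linExt (faceBarycenter k m) w = 0 ↔ w = 0 := by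
  refine ⟨fun h => ?_, fun h => by rw [h, linExt_eq_linearCombination, map_zero]⟩
  rw [← Function.support_eq_empty_iff, ← not_nonempty_iff_eq_empty]
  rintro ⟨x, hx⟩
  obtain ⟨g, hg⟩ := hN.maxBelow_nonempty (hw.2.1 hx)
  have : g ∈ Function.support (linExt (faceBarycenter k m) w) := by
    rw [support_linExt_faceBarycenter hN hw]
    exact mem_biUnion hx hg
  exact this (congrFun h g)

lemma update_zero_mem_chainCone {w : Setoid (Fin m) → ℝ} (hw : w ∈ chainCone k m N)
    (z : Setoid (Fin m)) : Function.update w z 0 ∈ chainCone k m N := by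
  have hsupp : Function.support (Function.update w z 0) ⊆ Function.support w := by
    rw [Function.support_update_zero]; exact sdiff_subset
  refine ⟨fun v => ?_, hsupp.trans hw.2.1, hw.2.2.mono hsupp⟩
  rcases eq_or_ne v z with rfl | hvz
  · rw [Function.update_self]
  · rw [Function.update_of_ne hvz]; exact hw.1 v

lemma add_single_mem_chainCone {w : Setoid (Fin m) → ℝ} (hw : w ∈ chainCone k m N)
    {z : Setoid (Fin m)} (hz : z ∈ SigmaSet k m N \ {⊥}) (hle : ∀ x ∈ Function.support w, x ≤ z)
    {t : ℝ} (ht : 0 ≤ t) : w + Pi.single z t ∈ chainCone k m N := by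
  have hsupp : Function.support (w + Pi.single z t) ⊆ insert z (Function.support w) :=
    (Function.support_add _ _).trans (union_subset_union_right _ Pi.support_single_subset)
      |>.trans (by rw [union_comm, ← insert_eq])
  refine ⟨fun v => add_nonneg (hw.1 v) ?_, hsupp.trans (insert_subset hz hw.2.1),
    (hw.2.2.insert fun x hx _ => .inr (hle x hx)).mono hsupp⟩
  rcases eq_or_ne v z with rfl | hvz
  exacts [by rwa [Pi.single_eq_same], by rw [Pi.single_eq_of_ne hvz]]

lemma injOn_linExt_faceBarycenter (hN : memN k m N) :
    InjOn (linExt (faceBarycenter k m)) (chainCone k m N) := by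
  intro w₁ hw₁ w₂ hw₂ heq
  induction hn : (Function.support w₁).ncard using Nat.strong_induction_on
    generalizing w₁ w₂ with
  | _ n ih =>
  by_cases h0 : linExt (faceBarycenter k m) w₁ = 0
  · rw [(linExt_faceBarycenter_eq_zero_iff hN hw₁).mp h0,
      (linExt_faceBarycenter_eq_zero_iff hN hw₂).mp (heq ▸ h0)]
  have hne : ∀ {w}, w ∈ chainCone k m N → linExt (faceBarycenter k m) w ≠ 0 →
      (Function.support w).Nonempty := fun hw h =>
    nonempty_iff_ne_empty.mpr fun he => h ((linExt_faceBarycenter_eq_zero_iff hN hw).mpr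
      (Function.support_eq_empty_iff.mp he))
  obtain ⟨z, hz₁⟩ := hw₁.2.2.exists_isGreatest (toFinite _) (hne hw₁ h0)
  obtain ⟨z₂, hz₂⟩ := hw₂.2.2.exists_isGreatest (toFinite _) (hne hw₂ (heq ▸ h0))
  obtain rfl : z = z₂ := by
    rw [← sSup_support_linExt hN hw₁ hz₁, heq, sSup_support_linExt hN hw₂ hz₂]
  have hval : w₁ z = w₂ z := by
    have := (isLeast_linExt hN hw₁ hz₁).unique (heq ▸ isLeast_linExt hN hw₂ hz₂)
    exact mul_right_cancel₀ (inv_ne_zero (Nat.cast_ne_zero.mpr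
      (hN.maxBelow_nonempty (hw₁.2.1 hz₁.1)).ncard_pos.ne')) this
  have hlt : (Function.support (Function.update w₁ z 0)).ncard < n := by
    rw [Function.support_update_zero, ← hn]
    exact ncard_sdiff_singleton_lt_of_mem hz₁.1
  have heq' := ih _ hlt (update_zero_mem_chainCone hw₁ z) (update_zero_mem_chainCone hw₂ z)
    (by rw [linExt_update_zero, linExt_update_zero, heq, hval]) rfl
  rw [← update_zero_add_single w₁ z, ← update_zero_add_single w₂ z, heq', hval]

lemma exists_mem_chainCone_linExt_eq (hN : memN k m N) {u : Setoid (Fin m) → ℝ}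
    (hu : ∀ g, 0 ≤ u g) (huN : Function.support u ⊆ N) :
    ∃ w ∈ chainCone k m N, linExt (faceBarycenter k m) w = u := by
  induction hn : (Function.support u).ncard using Nat.strong_induction_on generalizing u with
  | _ n ih =>
  rcases (Function.support u).eq_empty_or_nonempty with h0 | hne
  · refine ⟨0, ⟨fun _ => le_rfl, by simp, by simp⟩, ?_⟩
    rw [Function.support_eq_empty_iff.mp h0, linExt_eq_linearCombination, map_zero]
  -- peel off the join `z` of the support, with the largest weight keeping `u` nonnegative
  set z := sSup (Function.support u)
  set F := maxBelow (BSG k m) z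
  have hz : z ∈ SigmaSet k m N \ {⊥} := hN.sSup_mem_SigmaSet huN hne
  have hFu : F ⊆ Function.support u := hN.maxBelow_sSup_subset huN
  obtain ⟨g₀, hg₀, hmin⟩ := F.exists_min_image u (toFinite F) (hN.maxBelow_nonempty hz)
  have hsupp := support_sub_smul_unifOn_subset hFu hg₀
  obtain ⟨w', hw', hw'u⟩ := ih _ (hn ▸ (ncard_le_ncard hsupp).trans_lt
    (ncard_sdiff_singleton_lt_of_mem (hFu hg₀))) (sub_smul_unifOn_nonneg hu hmin)
    (hsupp.trans (sdiff_subset.trans huN)) rfl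
  have hle : ∀ x ∈ Function.support w', x ≤ z := fun x hx =>
    (le_sSup_support_linExt hN hw' hx).trans (sSup_le_sSup (hw'u ▸ hsupp.trans sdiff_subset))
  refine ⟨w' + Pi.single z (F.ncard * u g₀), add_single_mem_chainCone hw' hz hle
    (mul_nonneg (Nat.cast_nonneg _) (hu g₀)), ?_⟩
  rw [linExt_add_single, hw'u]
  exact sub_add_cancel _ _

/-- The faces of `Δ(Σ(N))`. -/
def orderComplexFaces (k m : ℕ) (N : Set (Setoid (Fin m))) : Set (Set (Setoid (Fin m))) :=
  {S | S.Nonempty ∧ S.Finite ∧ S ⊆ SigmaSet k m N \ {⊥} ∧ IsChain (· ≤ ·) S}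

/-- The faces of the full simplex `𝒩_N`. -/
def simplexFaces {V : Type*} (N : Set V) : Set (Set V) :=
  {S | S.Nonempty ∧ S.Finite ∧ S ⊆ N}

lemma isComplexF_orderComplexFaces : IsComplexF (orderComplexFaces k m N) :=
  fun _ ⟨hne, hfin, hsub, hchain⟩ =>
    ⟨hne, hfin, fun _ hts htne => ⟨htne, hfin.subset hts, hts.trans hsub, hchain.mono hts⟩⟩

lemma mem_geomF_orderComplexFaces {w : Setoid (Fin m) → ℝ} :
    w ∈ geomF (orderComplexFaces k m N) ↔ w ∈ chainCone k m N ∧ ∑ v, w v = 1 := by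
  rw [mem_geomF_iff]
  exact ⟨fun ⟨h0, h1, _, _, hsub, hchain⟩ => ⟨⟨h0, hsub, hchain⟩, h1⟩,
    fun ⟨⟨h0, hsub, hchain⟩, h1⟩ =>
      ⟨h0, h1, support_nonempty_of_sum_eq_one h1, toFinite _, hsub, hchain⟩⟩

lemma mem_geomF_simplexFaces {u : Setoid (Fin m) → ℝ} :
    u ∈ geomF (simplexFaces N) ↔
      ((∀ g, 0 ≤ u g) ∧ Function.support u ⊆ N) ∧ ∑ g, u g = 1 := by
  rw [mem_geomF_iff]
  exact ⟨fun ⟨h0, h1, _, _, hsub⟩ => ⟨⟨h0, hsub⟩, h1⟩,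
    fun ⟨⟨h0, hsub⟩, h1⟩ => ⟨h0, h1, support_nonempty_of_sum_eq_one h1, toFinite _, hsub⟩⟩

lemma biUnion_maxBelow_mem_simplexFaces (hN : memN k m N) {ω : Set (Setoid (Fin m))}
    (hω : ω ∈ orderComplexFaces k m N) :
    ⋃ x ∈ ω, maxBelow (BSG k m) x ∈ simplexFaces N := by
  obtain ⟨⟨x, hx⟩, -, hsub, -⟩ := hω
  obtain ⟨g, hg⟩ := hN.maxBelow_nonempty (hsub hx)
  exact ⟨⟨g, mem_biUnion hx hg⟩, toFinite _,
    iUnion₂_subset fun y hy => hN.maxBelow_subset (hsub hy).1⟩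

lemma bijOn_linExt_faceBarycenter (hN : memN k m N) :
    BijOn (linExt (faceBarycenter k m)) (geomF (orderComplexFaces k m N))
      (geomF (simplexFaces N)) := by
  refine ⟨fun w hw => ?_, (injOn_linExt_faceBarycenter hN).mono fun w hw =>
    (mem_geomF_orderComplexFaces.mp hw).1, fun u hu => ?_⟩
  · obtain ⟨hwc, hw1⟩ := mem_geomF_orderComplexFaces.mp hw
    refine mem_geomF_simplexFaces.mpr ⟨⟨linExt_nonneg faceBarycenter_nonneg hwc.1, ?_⟩,
      (sum_linExt_faceBarycenter hN hwc).trans hw1⟩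
    rw [support_linExt_faceBarycenter hN hwc]
    exact iUnion₂_subset fun x hx => hN.maxBelow_subset (hwc.2.1 hx).1
  · obtain ⟨⟨hu0, huN⟩, hu1⟩ := mem_geomF_simplexFaces.mp hu
    obtain ⟨w, hwc, rfl⟩ := exists_mem_chainCone_linExt_eq hN hu0 huN
    exact ⟨w, mem_geomF_orderComplexFaces.mpr
      ⟨hwc, (sum_linExt_faceBarycenter hN hwc).symm.trans hu1⟩, rfl⟩

end Subdivision

theorem stmt16_general (k m : ℕ)
    (N : Set (Setoid (Fin m))) (hN : memN k m N) :
    (∀ ω ∈ {S : Set (Setoid (Fin m)) |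
        S.Nonempty ∧ S.Finite ∧ S ⊆ SigmaSet k m N \ {⊥} ∧ IsChain (· ≤ ·) S},
      (⋃ x ∈ ω, maxBelow (BSG k m) x) ∈
        {S : Set (Setoid (Fin m)) | S.Nonempty ∧ S.Finite ∧ S ⊆ N}) ∧
    ∃ f0 : Setoid (Fin m) → Setoid (Fin m) → ℝ,
      IsSubdivOn
        {S : Set (Setoid (Fin m)) |
          S.Nonempty ∧ S.Finite ∧ S ⊆ SigmaSet k m N \ {⊥} ∧ IsChain (· ≤ ·) S}
        {S : Set (Setoid (Fin m)) | S.Nonempty ∧ S.Finite ∧ S ⊆ N}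
        (fun ω => ⋃ x ∈ ω, maxBelow (BSG k m) x) f0 := by
  have hcarrier : ∀ ω ∈ orderComplexFaces k m N,
      ⋃ x ∈ ω, maxBelow (BSG k m) x ∈ simplexFaces N :=
    fun _ => biUnion_maxBelow_mem_simplexFaces hN
  refine ⟨hcarrier, faceBarycenter k m, hcarrier,
    fun _ _ _ _ h => biUnion_subset_biUnion_left h, fun p hp v hv => ?_,
    exists_homeomorph_of_bijOn isComplexF_orderComplexFaces (bijOn_linExt_faceBarycenter hN)⟩
  exact unifOn_mem_closedCell (hN.maxBelow_nonempty (hp.2.2.1 hv)) (subset_biUnion_of_mem hv)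

/-- For a face `N` of the complex of k-trees, the map sending a chain
`ω` in `Σ(N) \ {⊥}` to the union of the factor sets of its members is the carrier map of
a subdivision of the full simplex on `N` by the order complex of `Σ(N) \ {⊥}`; in
particular each such union of factor sets is a (nonempty) subset of `N`. -/
theorem stmt16 (k m : ℕ) (hk : 1 ≤ k) (hm : m ≡ 1 [MOD k])
    (N : Set (Setoid (Fin m))) (hN : memN k m N) (hne : N.Nonempty) :
    (∀ ω ∈ {S : Set (Setoid (Fin m)) |
        S.Nonempty ∧ S.Finite ∧ S ⊆ SigmaSet k m N \ {⊥} ∧ IsChain (· ≤ ·) S},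
      (⋃ x ∈ ω, maxBelow (BSG k m) x) ∈
        {S : Set (Setoid (Fin m)) | S.Nonempty ∧ S.Finite ∧ S ⊆ N}) ∧
    ∃ f0 : Setoid (Fin m) → Setoid (Fin m) → ℝ,
      IsSubdivOn
        {S : Set (Setoid (Fin m)) |
          S.Nonempty ∧ S.Finite ∧ S ⊆ SigmaSet k m N \ {⊥} ∧ IsChain (· ≤ ·) S}
        {S : Set (Setoid (Fin m)) | S.Nonempty ∧ S.Finite ∧ S ⊆ N}
        (fun ω => ⋃ x ∈ ω, maxBelow (BSG k m) x) f0 :=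
  stmt16_general k m N hN
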